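/- arXiv:2007.05983 — 8 statements merged into one kernel-verified Lean document; each statement's English description precedes it below -/
import Mathlib

section
/- Optimality of the Kamenica–Gentzkow policy with two actions: suppose A = {a₀, a₁} has exactly two elements, a* = a₀, u(a₀, ω₀) > u(a₁, ω₀) and u(a₁, ω₁) > u(a₀, ω₁) (so a₀ is the agent's uniquely optimal action when the state is known to be ω₀, and a₁ when it is known to be ω₁). Define the static persuasion value KG(p) = sup of Σ_{s ∈ S} λ_s·v(a_s, p_s) over all families (λ_s, p_s, a_s), s ∈ S, with λ_s ∈ [0,1], p_s ∈ [0,1], a_s ∈ A, Σ_{s ∈ S} λ_s = 1, Σ_{s ∈ S} λ_s·p_s = p, and u(a_s, p_s) = m(p_s) for every s. Then V*(p, m(p)) = KG(p) for every p ∈ [0,1]. -/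
/-!
Lower bound: a static policy can be repeated forever. Promising the agent his static best payoff
`m(q)` at every posterior `q` makes obedience incentive compatible, and convexity of `m` gives
promise keeping; at each posterior the principal can keep the belief fixed and collect `v(a, q)`
forever, so `V*(p, m(p)) ≥ KG(p)`.

Upper bound: put the multiplier `c = v(a₀, ω₁) / (u(a₁, ω₁) - u(a₀, ω₁))` on the promise-keeping
constraint. Since `a₀` maximises `v + c u` at every belief, the affine function
`g(p, w) = v(a₀, p) + c (u(a₀, p) - w)` satisfies: `V* ≤ g + B` on `W` implies `V* ≤ g + δ B`,
hence `V* ≤ g`. Finally `g(p, m(p))` is the value of the static policy that reveals nothing when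
`a₀` is optimal at `p`, and otherwise splits `p` between the belief making the agent indifferent
and certainty of `ω₁`.
-/

noncomputable section

/-- Expected payoff of action `a` at belief `p` (= probability of state `ω₁`, encoded `true`). -/
def euP {A : Type*} (u : A → Bool → ℝ) (a : A) (p : ℝ) : ℝ :=
  (1 - p) * u a false + p * u a true

/-- The agent's best static payoff `m(p)` at belief `p`. -/
def mFun {A : Type*} [Fintype A] [Nonempty A] (u : A → Bool → ℝ) (p : ℝ) : ℝ :=
  Finset.univ.sup' Finset.univ_nonempty (fun a => euP u a p)

/-- The agent's full-information payoff `M(p)` at belief `p`. -/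
def MFun {A : Type*} [Fintype A] [Nonempty A] (u : A → Bool → ℝ) (p : ℝ) : ℝ :=
  (1 - p) * Finset.univ.sup' Finset.univ_nonempty (fun a => u a false)
    + p * Finset.univ.sup' Finset.univ_nonempty (fun a => u a true)

/-- The set `W` of pairs (belief, promised utility). -/
def Wset {A : Type*} [Fintype A] [Nonempty A] (u : A → Bool → ℝ) : Set (ℝ × ℝ) :=
  {pw | pw.1 ∈ Set.Icc (0 : ℝ) 1 ∧ mFun u pw.1 ≤ pw.2 ∧ pw.2 ≤ MFun u pw.1}

/-- A family: for each signal a probability, a posterior belief, a promised continuation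
utility, and a recommended action. -/
structure Fam (A S : Type*) where
  prob : S → ℝ
  belief : S → ℝ
  promise : S → ℝ
  act : S → A

/-- Feasibility of the family `f` at the point `pw = (p, w) ∈ W`. -/
def Feasible {A S : Type*} [Fintype A] [Nonempty A] [Fintype S]
    (u : A → Bool → ℝ) (δ : ℝ) (pw : ℝ × ℝ) (f : Fam A S) : Prop :=
  (∀ s, f.prob s ∈ Set.Icc (0 : ℝ) 1) ∧
  (∀ s, (f.belief s, f.promise s) ∈ Wset u) ∧
  (∀ s, (1 - δ) * euP u (f.act s) (f.belief s) + δ * f.promise s ≥ mFun u (f.belief s)) ∧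
  (∑ s, f.prob s * ((1 - δ) * euP u (f.act s) (f.belief s) + δ * f.promise s) ≥ pw.2) ∧
  (∑ s, f.prob s * f.belief s = pw.1) ∧
  (∑ s, f.prob s = 1)

/-- The principal's payoff from the family `f`, given continuation value function `V`. -/
def famPayoff {A S : Type*} [Fintype S] (v : A → Bool → ℝ) (δ : ℝ) (V : ℝ × ℝ → ℝ)
    (f : Fam A S) : ℝ :=
  ∑ s, f.prob s * ((1 - δ) * euP v (f.act s) (f.belief s) + δ * V (f.belief s, f.promise s))

/-- The Bellman operator `T`. -/
def bellman {A S : Type*} [Fintype A] [Nonempty A] [Fintype S]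
    (u v : A → Bool → ℝ) (δ : ℝ) (V : ℝ × ℝ → ℝ) (pw : ℝ × ℝ) : ℝ :=
  sSup {x | ∃ f : Fam A S, Feasible u δ pw f ∧ x = famPayoff v δ V f}

/-- `V` is bounded on `W`. -/
def BddOnW {A : Type*} [Fintype A] [Nonempty A] (u : A → Bool → ℝ) (V : ℝ × ℝ → ℝ) : Prop :=
  ∃ C : ℝ, ∀ pw ∈ Wset u, |V pw| ≤ C

section Payoffs

variable {A S : Type*} (u : A → Bool → ℝ)

@[simp] lemma euP_zero (a : A) : euP u a 0 = u a false := by simp [euP]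

@[simp] lemma euP_one (a : A) : euP u a 1 = u a true := by simp [euP]

lemma euP_eq_affine (a : A) (p : ℝ) : euP u a p = (1 - p) * euP u a 0 + p * euP u a 1 := by
  simp [euP]

lemma sum_mul_euP [Fintype S] (a : A) {lam pos : S → ℝ} (hlam : ∑ s, lam s = 1) :
    ∑ s, lam s * euP u a (pos s) = euP u a (∑ s, lam s * pos s) := by
  have h : ∀ x, euP u a x = u a false + x * (u a true - u a false) := fun x => by
    unfold euP; ring
  simp only [h, mul_add, Finset.sum_add_distrib, ← Finset.sum_mul, hlam, one_mul, ← mul_assoc]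

lemma euP_le_abs_add_abs (a : A) {q : ℝ} (hq : q ∈ Set.Icc (0 : ℝ) 1) :
    euP u a q ≤ |u a false| + |u a true| := by
  obtain ⟨hq0, hq1⟩ := hq
  unfold euP
  nlinarith [le_abs_self (u a false), le_abs_self (u a true), abs_nonneg (u a false),
    abs_nonneg (u a true)]

variable [Fintype A] [Nonempty A]

lemma euP_le_mFun (a : A) (p : ℝ) : euP u a p ≤ mFun u p :=
  Finset.le_sup' (fun a => euP u a p) (Finset.mem_univ a)

lemma exists_euP_eq_mFun (p : ℝ) : ∃ a, euP u a p = mFun u p := by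
  obtain ⟨a, -, ha⟩ := Finset.exists_mem_eq_sup' Finset.univ_nonempty (fun a => euP u a p)
  exact ⟨a, ha.symm⟩

lemma MFun_eq (p : ℝ) : MFun u p = (1 - p) * mFun u 0 + p * mFun u 1 := by
  simp [MFun, mFun]

lemma mFun_sum_le [Fintype S] {lam pos : S → ℝ} (hlam0 : ∀ s, 0 ≤ lam s) (hlam : ∑ s, lam s = 1) :
    mFun u (∑ s, lam s * pos s) ≤ ∑ s, lam s * mFun u (pos s) := by
  refine Finset.sup'_le _ _ fun a _ => ?_
  rw [← sum_mul_euP u a hlam]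
  exact Finset.sum_le_sum fun s _ =>
    mul_le_mul_of_nonneg_left (euP_le_mFun u a (pos s)) (hlam0 s)

lemma mFun_le_MFun {p : ℝ} (hp : p ∈ Set.Icc (0 : ℝ) 1) : mFun u p ≤ MFun u p := by
  refine Finset.sup'_le _ _ fun a _ => ?_
  rw [euP_eq_affine, MFun_eq]
  have h0 := euP_le_mFun u a 0
  have h1 := euP_le_mFun u a 1
  nlinarith [hp.1, hp.2]

lemma mk_mFun_mem_Wset {p : ℝ} (hp : p ∈ Set.Icc (0 : ℝ) 1) : (p, mFun u p) ∈ Wset u :=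
  ⟨hp, le_rfl, mFun_le_MFun u hp⟩

end Payoffs

section TwoPoint

variable {S : Type*} [DecidableEq S] {s₀ s₁ : S} {lam : ℝ}

def twoPoint (s₀ s₁ : S) (lam : ℝ) : S → ℝ :=
  fun s => if s = s₀ then lam else if s = s₁ then 1 - lam else 0

lemma twoPoint_mem_Icc (hlam : lam ∈ Set.Icc (0 : ℝ) 1) (s : S) :
    twoPoint s₀ s₁ lam s ∈ Set.Icc (0 : ℝ) 1 := by
  obtain ⟨h0, h1⟩ := hlam
  unfold twoPoint
  split_ifs <;> constructor <;> linarith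

variable [Fintype S]

lemma sum_twoPoint_mul (hs : s₀ ≠ s₁) (F : S → ℝ) :
    ∑ s, twoPoint s₀ s₁ lam s * F s = lam * F s₀ + (1 - lam) * F s₁ := by
  rw [Fintype.sum_eq_add s₀ s₁ hs fun s ⟨h₀, h₁⟩ => by simp [twoPoint, h₀, h₁]]
  simp [twoPoint, hs.symm]

lemma sum_twoPoint (hs : s₀ ≠ s₁) : ∑ s, twoPoint s₀ s₁ lam s = 1 := by
  simpa using sum_twoPoint_mul (lam := lam) hs 1

end TwoPoint

section Bellman

variable {A S : Type*} [Fintype A] [Nonempty A] [Fintype S] (u v : A → Bool → ℝ) {δ : ℝ}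

def Fam.ofStatic (lam pos : S → ℝ) (act : S → A) : Fam A S :=
  ⟨lam, pos, fun s => mFun u (pos s), act⟩

lemma feasible_ofStatic {p w : ℝ} {lam pos : S → ℝ} {act : S → A}
    (hlam : ∀ s, lam s ∈ Set.Icc (0 : ℝ) 1) (hpos : ∀ s, pos s ∈ Set.Icc (0 : ℝ) 1)
    (hsum : ∑ s, lam s = 1) (hbayes : ∑ s, lam s * pos s = p)
    (hopt : ∀ s, euP u (act s) (pos s) = mFun u (pos s))
    (hw : w ≤ ∑ s, lam s * mFun u (pos s)) :
    Feasible u δ (p, w) (Fam.ofStatic u lam pos act) := by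
  have hcont : ∀ s, (1 - δ) * euP u (act s) (pos s) + δ * mFun u (pos s) = mFun u (pos s) :=
    fun s => by rw [hopt]; ring
  refine ⟨hlam, fun s => mk_mFun_mem_Wset u (hpos s), fun s => (hcont s).ge, ?_, hbayes, hsum⟩
  simpa only [Fam.ofStatic, hcont] using hw

variable {u v}

lemma famPayoff_le_bellman {V : ℝ × ℝ → ℝ} {pw : ℝ × ℝ} {f : Fam A S} (hV : BddOnW u V)
    (hδ : δ ∈ Set.Icc (0 : ℝ) 1) (hf : Feasible u δ pw f) :
    famPayoff v δ V f ≤ bellman (S := S) u v δ V pw := by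
  obtain ⟨C, hC⟩ := hV
  set K := ∑ a, (|v a false| + |v a true|)
  have hK : ∀ a q, q ∈ Set.Icc (0 : ℝ) 1 → euP v a q ≤ K := fun a q hq =>
    (euP_le_abs_add_abs v a hq).trans <|
      Finset.single_le_sum (f := fun a => |v a false| + |v a true|)
        (fun a _ => by positivity) (Finset.mem_univ a)
  refine le_csSup ⟨(1 - δ) * K + δ * C, ?_⟩ ⟨f, hf, rfl⟩
  rintro _ ⟨g, ⟨hprob, hW, -, -, -, hsum⟩, rfl⟩
  calc famPayoff v δ V g ≤ ∑ s, g.prob s * ((1 - δ) * K + δ * C) := by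
        refine Finset.sum_le_sum fun s _ => mul_le_mul_of_nonneg_left ?_ (hprob s).1
        have hv := hK (g.act s) _ (hW s).1
        have hV := (abs_le.1 (hC _ (hW s))).2
        nlinarith [hδ.1, hδ.2]
    _ = (1 - δ) * K + δ * C := by rw [← Finset.sum_mul, hsum, one_mul]

lemma bellman_le {V : ℝ × ℝ → ℝ} {pw : ℝ × ℝ} {b : ℝ} (hne : ∃ f : Fam A S, Feasible u δ pw f)
    (h : ∀ f : Fam A S, Feasible u δ pw f → famPayoff v δ V f ≤ b) :
    bellman (S := S) u v δ V pw ≤ b := by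
  obtain ⟨f, hf⟩ := hne
  exact csSup_le ⟨_, f, hf, rfl⟩ fun _ ⟨g, hg, hx⟩ => hx ▸ h g hg

/-- Full revelation of the state, with the agent promised his static best payoff. -/
lemma exists_feasible [Nontrivial S] {pw : ℝ × ℝ} (hpw : pw ∈ Wset u) :
    ∃ f : Fam A S, Feasible u δ pw f := by
  classical
  obtain ⟨p, w⟩ := pw
  obtain ⟨hp, -, hw⟩ := hpw
  obtain ⟨s₀, s₁, hs⟩ := exists_pair_ne S
  obtain ⟨a₀, ha₀⟩ := exists_euP_eq_mFun u 0
  obtain ⟨a₁, ha₁⟩ := exists_euP_eq_mFun u 1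
  refine ⟨Fam.ofStatic u (twoPoint s₀ s₁ (1 - p)) (fun s => if s = s₀ then 0 else 1)
    (fun s => if s = s₀ then a₀ else a₁), feasible_ofStatic u
    (twoPoint_mem_Icc ⟨by linarith [hp.2], by linarith [hp.1]⟩) (fun s => ?_)
    (sum_twoPoint hs) ?_ (fun s => ?_) ?_⟩
  · split_ifs <;> simp
  · rw [sum_twoPoint_mul hs]; simp [hs.symm]
  · split_ifs <;> assumption
  · rw [sum_twoPoint_mul hs]; simpa [hs.symm, MFun_eq] using hw

end Bellman

lemma le_of_le_add_of_contraction {ι : Type*} {s : Set ι} {F G : ι → ℝ} {δ : ℝ}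
    (hδ : δ ∈ Set.Ico (0 : ℝ) 1) (h₀ : ∃ B, ∀ x ∈ s, F x ≤ G x + B)
    (hstep : ∀ B, (∀ x ∈ s, F x ≤ G x + B) → ∀ x ∈ s, F x ≤ G x + δ * B) :
    ∀ x ∈ s, F x ≤ G x := by
  obtain ⟨B, hB⟩ := h₀
  have hn : ∀ n : ℕ, ∀ x ∈ s, F x ≤ G x + δ ^ n * B := by
    intro n
    induction n with
    | zero => simpa using hB
    | succ n ih => simpa only [pow_succ', mul_assoc] using hstep _ ih
  intro x hx
  have hlim : Filter.Tendsto (fun n : ℕ => G x + δ ^ n * B) Filter.atTop (nhds (G x)) := by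
    simpa using tendsto_const_nhds.add
      ((tendsto_pow_atTop_nhds_zero_of_lt_one hδ.1 hδ.2).mul_const B)
  exact ge_of_tendsto' hlim fun n => hn n x hx

section FixedPoint

variable {A S : Type*} [Fintype A] [Nonempty A] [Fintype S] {u v : A → Bool → ℝ} {δ : ℝ}
  {V : ℝ × ℝ → ℝ}

lemma famPayoff_le_of_fixed (hδ : δ ∈ Set.Icc (0 : ℝ) 1) (hV : BddOnW u V)
    (hfix : ∀ pw ∈ Wset u, bellman (S := S) u v δ V pw = V pw) {pw : ℝ × ℝ} (hpw : pw ∈ Wset u)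
    {f : Fam A S} (hf : Feasible u δ pw f) : famPayoff v δ V f ≤ V pw :=
  hfix pw hpw ▸ famPayoff_le_bellman hV hδ hf

/-- Repeating forever a belief at which `a` is optimal gives the principal `v(a, q)`. -/
lemma euP_le_of_fixed [Nonempty S] (hδ : δ ∈ Set.Ioo (0 : ℝ) 1) (hV : BddOnW u V)
    (hfix : ∀ pw ∈ Wset u, bellman (S := S) u v δ V pw = V pw) {q : ℝ}
    (hq : q ∈ Set.Icc (0 : ℝ) 1) {a : A} (ha : euP u a q = mFun u q) :
    euP v a q ≤ V (q, mFun u q) := by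
  classical
  obtain ⟨s₀⟩ := ‹Nonempty S›
  have hsum : ∑ s, Pi.single s₀ (1 : ℝ) s = 1 := by simp
  have hf := feasible_ofStatic (δ := δ) u (lam := Pi.single s₀ 1) (pos := fun _ => q)
    (act := fun _ => a) (fun s => by rcases eq_or_ne s s₀ with rfl | h <;> simp [*])
    (fun _ => hq) hsum (by rw [← Finset.sum_mul, hsum, one_mul])
    (fun _ => ha) (by rw [← Finset.sum_mul, hsum, one_mul])
  have h := famPayoff_le_of_fixed (Set.Ioo_subset_Icc_self hδ) hV hfix (mk_mFun_mem_Wset u hq) hf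
  simp only [famPayoff, Fam.ofStatic, ← Finset.sum_mul, hsum, one_mul] at h
  nlinarith [hδ.1, hδ.2]

end FixedPoint

section Static

variable {A : Type*} [Fintype A] [Nonempty A] (S : Type*) [Fintype S] (u v : A → Bool → ℝ)

/-- `KG(p)` is the supremum of this set. -/
def staticPersuasionValues (p : ℝ) : Set ℝ :=
  {x : ℝ | ∃ lam pos : S → ℝ, ∃ act : S → A,
    (∀ s, lam s ∈ Set.Icc (0 : ℝ) 1) ∧ (∀ s, pos s ∈ Set.Icc (0 : ℝ) 1) ∧
    (∑ s, lam s = 1) ∧ (∑ s, lam s * pos s = p) ∧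
    (∀ s, euP u (act s) (pos s) = mFun u (pos s)) ∧
    x = ∑ s, lam s * euP v (act s) (pos s)}

variable {S u v}

lemma twoPoint_mem_staticPersuasionValues [Nontrivial S] {lam q₀ q₁ p : ℝ} {b₀ b₁ : A}
    (hlam : lam ∈ Set.Icc (0 : ℝ) 1) (hq₀ : q₀ ∈ Set.Icc (0 : ℝ) 1) (hq₁ : q₁ ∈ Set.Icc (0 : ℝ) 1)
    (hb₀ : euP u b₀ q₀ = mFun u q₀) (hb₁ : euP u b₁ q₁ = mFun u q₁)
    (hp : lam * q₀ + (1 - lam) * q₁ = p) :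
    lam * euP v b₀ q₀ + (1 - lam) * euP v b₁ q₁ ∈ staticPersuasionValues S u v p := by
  classical
  obtain ⟨s₀, s₁, hs⟩ := exists_pair_ne S
  refine ⟨twoPoint s₀ s₁ lam, fun s => if s = s₀ then q₀ else q₁,
    fun s => if s = s₀ then b₀ else b₁, twoPoint_mem_Icc hlam, fun s => ?_, sum_twoPoint hs,
    ?_, fun s => ?_, ?_⟩
  · dsimp only; split_ifs <;> assumption
  · rw [sum_twoPoint_mul hs]; simpa [hs.symm] using hp
  · dsimp only; split_ifs <;> assumption
  · simp [sum_twoPoint_mul hs, hs.symm]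

lemma le_of_mem_staticPersuasionValues [Nonempty S] {δ : ℝ} {V : ℝ × ℝ → ℝ}
    (hδ : δ ∈ Set.Ioo (0 : ℝ) 1) (hV : BddOnW u V)
    (hfix : ∀ pw ∈ Wset u, bellman (S := S) u v δ V pw = V pw) {p x : ℝ}
    (hp : p ∈ Set.Icc (0 : ℝ) 1) (hx : x ∈ staticPersuasionValues S u v p) :
    x ≤ V (p, mFun u p) := by
  obtain ⟨lam, pos, act, hlam, hpos, hsum, hbayes, hopt, rfl⟩ := hx
  have hf := feasible_ofStatic (δ := δ) u hlam hpos hsum hbayes hopt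
    (hbayes ▸ mFun_sum_le u (fun s => (hlam s).1) hsum)
  refine le_trans ?_ (famPayoff_le_of_fixed (Set.Ioo_subset_Icc_self hδ) hV hfix
    (mk_mFun_mem_Wset u hp) hf)
  refine Finset.sum_le_sum fun s _ => mul_le_mul_of_nonneg_left ?_ (hlam s).1
  have h := euP_le_of_fixed hδ hV hfix (hpos s) (hopt s)
  simp only [Fam.ofStatic]
  nlinarith [hδ.1]

end Static

section Duality

variable {A S : Type*} [Fintype A] [Nonempty A] [Fintype S] {u v : A → Bool → ℝ} {δ : ℝ}
  {V : ℝ × ℝ → ℝ} {b : A} {c : ℝ}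

/-- The bound dual to the multiplier `c ≥ 0` of the promise-keeping constraint. -/
def dualBound (u v : A → Bool → ℝ) (b : A) (c : ℝ) (pw : ℝ × ℝ) : ℝ :=
  euP v b pw.1 + c * (euP u b pw.1 - pw.2)

lemma bddBelow_dualBound_image (hc : 0 ≤ c) : BddBelow (dualBound u v b c '' Wset u) := by
  set X₀ := v b false + c * (u b false - mFun u 0)
  set X₁ := v b true + c * (u b true - mFun u 1)
  refine ⟨min X₀ X₁, ?_⟩
  rintro _ ⟨⟨p, w⟩, ⟨hp, -, hw⟩, rfl⟩
  have hpk := mul_le_mul_of_nonneg_left (MFun_eq u p ▸ hw) hc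
  have hmin : min X₀ X₁ ≤ (1 - p) * X₀ + p * X₁ := by
    nlinarith [min_le_left X₀ X₁, min_le_right X₀ X₁, hp.1, hp.2]
  simp only [dualBound, euP, X₀, X₁] at hmin ⊢
  nlinarith

lemma famPayoff_le_dualBound (hδ : δ ∈ Set.Icc (0 : ℝ) 1) (hc : 0 ≤ c)
    (hL : ∀ a q, q ∈ Set.Icc (0 : ℝ) 1 → euP v a q + c * euP u a q ≤ euP v b q + c * euP u b q)
    {B : ℝ} (hB : ∀ x ∈ Wset u, V x ≤ dualBound u v b c x + B) {pw : ℝ × ℝ} {f : Fam A S}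
    (hf : Feasible u δ pw f) : famPayoff v δ V f ≤ dualBound u v b c pw + δ * B := by
  obtain ⟨hprob, hW, -, hpk, hbayes, hsum⟩ := hf
  set U : S → ℝ := fun s => (1 - δ) * euP u (f.act s) (f.belief s) + δ * f.promise s
  have hterm : ∀ s, (1 - δ) * euP v (f.act s) (f.belief s) + δ * V (f.belief s, f.promise s)
      ≤ euP v b (f.belief s) + c * euP u b (f.belief s) - c * U s + δ * B := by
    intro s
    have hLs := mul_le_mul_of_nonneg_left (hL (f.act s) _ (hW s).1) (sub_nonneg.2 hδ.2)
    have hVs := mul_le_mul_of_nonneg_left (hB _ (hW s)) hδ.1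
    simp only [dualBound, U] at hVs ⊢
    nlinarith
  calc famPayoff v δ V f
      ≤ ∑ s, f.prob s * (euP v b (f.belief s) + c * euP u b (f.belief s) - c * U s + δ * B) :=
        Finset.sum_le_sum fun s _ => mul_le_mul_of_nonneg_left (hterm s) (hprob s).1
    _ = ∑ s, f.prob s * euP v b (f.belief s) + c * ∑ s, f.prob s * euP u b (f.belief s)
          - c * ∑ s, f.prob s * U s + δ * B := by
        simp only [mul_add, mul_sub, Finset.sum_add_distrib, Finset.sum_sub_distrib,
          ← Finset.sum_mul, hsum, one_mul, Finset.mul_sum, mul_left_comm c]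
    _ ≤ dualBound u v b c pw + δ * B := by
        rw [sum_mul_euP v b hsum, sum_mul_euP u b hsum, hbayes]
        have := mul_le_mul_of_nonneg_left hpk hc
        simp only [dualBound, U] at this ⊢
        linarith

lemma le_dualBound_of_fixed [Nontrivial S] (hδ : δ ∈ Set.Ioo (0 : ℝ) 1) (hV : BddOnW u V)
    (hfix : ∀ pw ∈ Wset u, bellman (S := S) u v δ V pw = V pw) (hc : 0 ≤ c)
    (hL : ∀ a q, q ∈ Set.Icc (0 : ℝ) 1 → euP v a q + c * euP u a q ≤ euP v b q + c * euP u b q) :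
    ∀ pw ∈ Wset u, V pw ≤ dualBound u v b c pw := by
  obtain ⟨C, hC⟩ := hV
  obtain ⟨D, hD⟩ := bddBelow_dualBound_image (u := u) (v := v) (b := b) hc
  refine le_of_le_add_of_contraction (Set.Ioo_subset_Ico_self hδ) ⟨C - D, fun pw hpw => ?_⟩
    fun B hB pw hpw => ?_
  · linarith [(abs_le.1 (hC pw hpw)).2, hD (Set.mem_image_of_mem _ hpw)]
  · rw [← hfix pw hpw]
    exact bellman_le (exists_feasible hpw) fun f hf =>
      famPayoff_le_dualBound (Set.Ioo_subset_Icc_self hδ) hc hL hB hf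

end Duality

section TwoActions

variable {A S : Type*} {u v : A → Bool → ℝ} {a₀ a₁ : A}

lemma lagrangian_le_of_two_actions (hall : ∀ a, a = a₀ ∨ a = a₁)
    (hva₁ : v a₁ false = 0 ∧ v a₁ true = 0) (hv₀ : 0 ≤ v a₀ false) (hv₁ : 0 ≤ v a₀ true)
    (hu₀ : u a₁ false < u a₀ false) (hu₁ : u a₀ true < u a₁ true) (a : A) {q : ℝ}
    (hq : q ∈ Set.Icc (0 : ℝ) 1) :
    euP v a q + v a₀ true / (u a₁ true - u a₀ true) * euP u a q
      ≤ euP v a₀ q + v a₀ true / (u a₁ true - u a₀ true) * euP u a₀ q := by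
  obtain h | h := hall a
  · exact h ▸ le_rfl
  rw [h]
  set c := v a₀ true / (u a₁ true - u a₀ true)
  have hc : 0 ≤ c := div_nonneg hv₁ (by linarith)
  have hc₁ : c * (u a₁ true - u a₀ true) = v a₀ true := div_mul_cancel₀ _ (by linarith)
  have hc₀ := mul_le_mul_of_nonneg_left hu₀.le hc
  simp only [euP, hva₁]
  nlinarith [hq.1, hq.2]

variable [Fintype A] [Nonempty A]

lemma mFun_eq_max (hall : ∀ a, a = a₀ ∨ a = a₁) (p : ℝ) :
    mFun u p = max (euP u a₀ p) (euP u a₁ p) := by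
  refine le_antisymm (Finset.sup'_le _ _ fun a _ => ?_)
    (max_le (euP_le_mFun u a₀ p) (euP_le_mFun u a₁ p))
  rcases hall a with rfl | rfl
  exacts [le_max_left _ _, le_max_right _ _]

lemma dualBound_mem_staticPersuasionValues_of_two_actions [Fintype S] [Nontrivial S]
    (hall : ∀ a, a = a₀ ∨ a = a₁) (hva₁ : v a₁ false = 0 ∧ v a₁ true = 0)
    (hu₀ : u a₁ false < u a₀ false) (hu₁ : u a₀ true < u a₁ true) {p : ℝ}
    (hp : p ∈ Set.Icc (0 : ℝ) 1) :
    dualBound u v a₀ (v a₀ true / (u a₁ true - u a₀ true)) (p, mFun u p)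
      ∈ staticPersuasionValues S u v p := by
  rw [mFun_eq_max hall]
  by_cases h : euP u a₁ p ≤ euP u a₀ p
  · have hopt : euP u a₀ p = mFun u p := by rw [mFun_eq_max hall, max_eq_left h]
    simpa [dualBound, max_eq_left h] using
      twoPoint_mem_staticPersuasionValues (v := v) (lam := 1) ⟨zero_le_one, le_rfl⟩ hp hp
        hopt hopt (by ring)
  push Not at h
  set D₀ := u a₀ false - u a₁ false
  set D₁ := u a₁ true - u a₀ true
  have hD₀ : 0 < D₀ := sub_pos.2 hu₀
  have hD₁ : 0 < D₁ := sub_pos.2 hu₁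
  have hgain : ∀ x, euP u a₁ x - euP u a₀ x = x * D₁ - (1 - x) * D₀ := fun x => by
    simp only [euP, D₀, D₁]; ring
  have hsplit : (1 - p) * D₀ < p * D₁ := by linarith [hgain p]
  set q := D₀ / (D₀ + D₁)
  have hq : q ∈ Set.Icc (0 : ℝ) 1 := ⟨by positivity, (div_le_one (by positivity)).2 (by linarith)⟩
  have hindiff : euP u a₀ q = euP u a₁ q := by
    rw [← sub_eq_zero, ← neg_sub, hgain, neg_eq_zero, sub_eq_zero]
    simp only [q]
    field_simp
    ring
  set lam := (1 - p) * (D₀ + D₁) / D₁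
  have hlam : lam ∈ Set.Icc (0 : ℝ) 1 :=
    ⟨div_nonneg (mul_nonneg (by linarith [hp.2]) (by positivity)) hD₁.le,
      (div_le_one hD₁).2 (by linarith)⟩
  have hmem := twoPoint_mem_staticPersuasionValues (S := S) (v := v) (b₀ := a₀) (b₁ := a₁)
    hlam hq ⟨zero_le_one, le_rfl⟩
    (by rw [mFun_eq_max hall, hindiff, max_self])
    (by rw [mFun_eq_max hall, euP_one, euP_one, max_eq_right hu₁.le])
    (show lam * q + (1 - lam) * 1 = p by simp only [lam, q]; field_simp; ring)
  convert hmem using 1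
  rw [max_eq_right h.le, dualBound, ← neg_sub, hgain, euP_one, hva₁.2]
  simp only [euP, lam, q]
  field_simp
  ring

end TwoActions

theorem KG_policy_optimal_two_actions_general
    {A S : Type*} [Fintype A] [Nonempty A] [Fintype S]
    (u v : A → Bool → ℝ) (δ : ℝ) (astar : A)
    (hδ : δ ∈ Set.Ioo (0 : ℝ) 1)
    (hS2 : 2 ≤ Fintype.card S)
    (hv0 : 0 < v astar false) (hv1 : 0 < v astar true)
    (hvz : ∀ a : A, a ≠ astar → v a false = 0 ∧ v a true = 0)
    (Vstar : ℝ × ℝ → ℝ) (hVb : BddOnW u Vstar)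
    (hVfix : ∀ pw ∈ Wset u, bellman (S := S) u v δ Vstar pw = Vstar pw)
    (a0 a1 : A) (hne : a0 ≠ a1) (hall : ∀ a : A, a = a0 ∨ a = a1) (hastar : astar = a0)
    (hu0 : u a1 false < u a0 false) (hu1 : u a0 true < u a1 true) :
    ∀ p : ℝ, p ∈ Set.Icc (0 : ℝ) 1 →
      Vstar (p, mFun u p) =
        sSup {x : ℝ | ∃ lam pos : S → ℝ, ∃ act : S → A,
          (∀ s, lam s ∈ Set.Icc (0 : ℝ) 1) ∧ (∀ s, pos s ∈ Set.Icc (0 : ℝ) 1) ∧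
          (∑ s, lam s = 1) ∧ (∑ s, lam s * pos s = p) ∧
          (∀ s, euP u (act s) (pos s) = mFun u (pos s)) ∧
          x = ∑ s, lam s * euP v (act s) (pos s)} := by
  intro p hp
  subst hastar
  have : Nontrivial S := Fintype.one_lt_card_iff_nontrivial.1 hS2
  have hva₁ := hvz a1 hne.symm
  have hlow : ∀ x ∈ staticPersuasionValues S u v p, x ≤ Vstar (p, mFun u p) :=
    fun x hx => le_of_mem_staticPersuasionValues hδ hVb hVfix hp hx
  have hmem := dualBound_mem_staticPersuasionValues_of_two_actions (S := S) (v := v) hall hva₁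
    hu0 hu1 hp
  have hup := le_dualBound_of_fixed hδ hVb hVfix (div_nonneg hv1.le (sub_pos.2 hu1).le)
    (fun a q hq => lagrangian_le_of_two_actions hall hva₁ hv0.le hv1.le hu0 hu1 a hq)
    _ (mk_mFun_mem_Wset u hp)
  exact le_antisymm (hup.trans (le_csSup ⟨_, hlow⟩ hmem)) (csSup_le ⟨_, hmem⟩ hlow)

/-- with exactly two actions, the static Kamenica–Gentzkow policy is
optimal: `V*(p, m(p))` equals the static persuasion value at every prior `p`. -/
theorem KG_policy_optimal_two_actions
    {A S : Type*} [Fintype A] [Nonempty A] [Fintype S]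
    (u v : A → Bool → ℝ) (δ : ℝ) (astar : A)
    (hδ : δ ∈ Set.Ioo (0 : ℝ) 1)
    (hS2 : 2 ≤ Fintype.card S) (hAS : Fintype.card A ≤ Fintype.card S)
    (hv0 : 0 < v astar false) (hv1 : 0 < v astar true)
    (hvz : ∀ a : A, a ≠ astar → v a false = 0 ∧ v a true = 0)
    (Vstar : ℝ × ℝ → ℝ) (hVb : BddOnW u Vstar)
    (hVfix : ∀ pw ∈ Wset u, bellman (S := S) u v δ Vstar pw = Vstar pw)
    (a0 a1 : A) (hne : a0 ≠ a1) (hall : ∀ a : A, a = a0 ∨ a = a1) (hastar : astar = a0)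
    (hu0 : u a1 false < u a0 false) (hu1 : u a0 true < u a1 true) :
    ∀ p : ℝ, p ∈ Set.Icc (0 : ℝ) 1 →
      Vstar (p, mFun u p) =
        sSup {x : ℝ | ∃ lam pos : S → ℝ, ∃ act : S → A,
          (∀ s, lam s ∈ Set.Icc (0 : ℝ) 1) ∧ (∀ s, pos s ∈ Set.Icc (0 : ℝ) 1) ∧
          (∑ s, lam s = 1) ∧ (∑ s, lam s * pos s = p) ∧
          (∀ s, euP u (act s) (pos s) = mFun u (pos s)) ∧
          x = ∑ s, lam s * euP v (act s) (pos s)} :=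
  KG_policy_optimal_two_actions_general u v δ astar hδ hS2 hv0 hv1 hvz Vstar hVb hVfix a0 a1 hne
    hall hastar hu0 hu1
end
end

section
/- For every p ∈ [0,1) and every w ∈ ℝ with m(p) < w ≤ c(p), there exists a unique pair (λ, φ) with λ ∈ (0,1] and φ ∈ [0,1] such that λ·φ + (1−λ)·1 = p and λ·m(φ) + (1−λ)·m(1) = w; moreover this unique φ satisfies 0 ≤ φ ≤ p. -/
/-!
A splitting `(λ, φ)` puts `(p, w)` on the segment from `(φ, m φ)` to `(1, m 1)`, so it is determined
by `φ`, and `φ` is exactly a zero in `[0, p]` of the convex function `splitGap m p w`, which is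
`(1 - φ)` times the height above `w` of the chord from `(φ, m φ)` to `(1, m 1)` at abscissa `p`.
This function is `≥ 0` at `0` (as `w` lies below the chord of `m`) and `< 0` at `p` (as `w > m p`),
so it has a zero by the intermediate value theorem, and by convexity no second one left of `p`.
-/

open Set

theorem ConvexOn.eq_of_eq_of_lt {𝕜 β : Type*} [Field 𝕜] [LinearOrder 𝕜] [IsStrictOrderedRing 𝕜]
    [AddCommGroup β] [LinearOrder β] [IsOrderedCancelAddMonoid β] [Module 𝕜 β]
    [PosSMulStrictMono 𝕜 β] {s : Set 𝕜} {f : 𝕜 → β} (hf : ConvexOn 𝕜 s f) {a b c : 𝕜}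
    (ha : a ∈ s) (hb : b ∈ s) (hc : c ∈ s) (hac : a ≤ c) (hbc : b ≤ c) (hfab : f a = f b)
    (hfc : f c < f a) : a = b := by
  wlog hab : a < b generalizing a b
  · rcases (not_lt.1 hab).eq_or_lt with h | h
    · exact h.symm
    · exact (this hb ha hbc hac hfab.symm (hfab ▸ hfc) h).symm
  have hbc' : b < c := hbc.lt_of_ne (by rintro rfl; exact hfc.ne' hfab)
  have := hf.lt_left_of_right_lt ha hc (Ioo_subset_openSegment ⟨hab, hbc'⟩) (hfab ▸ hfc)
  exact absurd hfab this.ne'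

def IsSplitting (m : ℝ → ℝ) (p w : ℝ) (lp : ℝ × ℝ) : Prop :=
  (0 < lp.1 ∧ lp.1 ≤ 1) ∧ lp.2 ∈ Icc (0 : ℝ) 1 ∧
    lp.1 * lp.2 + (1 - lp.1) * 1 = p ∧ lp.1 * m lp.2 + (1 - lp.1) * m 1 = w

def splitGap (m : ℝ → ℝ) (p w φ : ℝ) : ℝ :=
  (1 - p) * m φ + (p - φ) * m 1 - (1 - φ) * w

section

variable {m : ℝ → ℝ} {p w : ℝ}

theorem splitGap_self : splitGap m p w p = (1 - p) * (m p - w) := by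
  unfold splitGap; ring

theorem splitGap_zero : splitGap m p w 0 = (1 - p) * m 0 + p * m 1 - w := by
  unfold splitGap; ring

theorem continuousOn_splitGap {s : Set ℝ} (hm : ContinuousOn m s) :
    ContinuousOn (splitGap m p w) s := by
  unfold splitGap; fun_prop

theorem convexOn_splitGap (hp : p ≤ 1) (hm : ConvexOn ℝ (Icc 0 1) m) :
    ConvexOn ℝ (Icc 0 1) (splitGap m p w) := by
  refine ⟨convex_Icc 0 1, fun x hx y hy a b ha hb hab => ?_⟩
  have hmxy := mul_le_mul_of_nonneg_left (hm.2 hx hy ha hb hab) (sub_nonneg.2 hp)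
  simp only [splitGap, smul_eq_mul] at hmxy ⊢
  linear_combination hmxy + (w - p * m 1) * hab

namespace IsSplitting

variable {lp : ℝ × ℝ}

theorem snd_le (h : IsSplitting m p w lp) : lp.2 ≤ p := by
  obtain ⟨⟨-, hl1⟩, ⟨-, hφ1⟩, hp, -⟩ := h
  nlinarith [mul_nonneg (sub_nonneg.2 hl1) (sub_nonneg.2 hφ1)]

theorem fst_eq (hp : p < 1) (h : IsSplitting m p w lp) : lp.1 = (1 - p) / (1 - lp.2) := by
  have hφ : lp.2 < 1 := h.snd_le.trans_lt hp
  rw [eq_div_iff (sub_ne_zero.2 hφ.ne')]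
  linear_combination -h.2.2.1

theorem splitGap_eq_zero (h : IsSplitting m p w lp) : splitGap m p w lp.2 = 0 := by
  obtain ⟨-, -, hp, hw⟩ := h
  unfold splitGap
  rw [← hp, ← hw]
  ring

end IsSplitting

theorem isSplitting_of_splitGap_eq_zero (hp : p < 1) {φ : ℝ} (hφ : φ ∈ Icc 0 p)
    (h : splitGap m p w φ = 0) : IsSplitting m p w ((1 - p) / (1 - φ), φ) := by
  have hφ1 : 0 < 1 - φ := by linarith [hφ.2]
  refine ⟨⟨div_pos (by linarith) hφ1, (div_le_one hφ1).2 (by linarith [hφ.2])⟩,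
    ⟨hφ.1, by linarith [hφ.2]⟩, ?_, ?_⟩
  · field_simp
    ring
  · field_simp
    unfold splitGap at h
    linear_combination h

end

/-- for a convex continuous `m` on `[0,1]`, any `(p, w)` with `p ∈ [0,1)`
and `m(p) < w ≤ (1-p)·m(0) + p·m(1)` admits a unique splitting `(λ, φ)` with
`λ ∈ (0,1]`, `φ ∈ [0,1]`, `λ·φ + (1-λ)·1 = p` and `λ·m(φ) + (1-λ)·m(1) = w`;
moreover the unique `φ` satisfies `0 ≤ φ ≤ p`. -/
theorem splitting_exists_unique
    (m : ℝ → ℝ) (hconv : ConvexOn ℝ (Set.Icc (0 : ℝ) 1) m)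
    (hcont : ContinuousOn m (Set.Icc (0 : ℝ) 1)) :
    ∀ p ∈ Set.Ico (0 : ℝ) 1, ∀ w : ℝ,
      m p < w → w ≤ (1 - p) * m 0 + p * m 1 →
      (∃! lp : ℝ × ℝ, (0 < lp.1 ∧ lp.1 ≤ 1) ∧ lp.2 ∈ Set.Icc (0 : ℝ) 1 ∧
          lp.1 * lp.2 + (1 - lp.1) * 1 = p ∧ lp.1 * m lp.2 + (1 - lp.1) * m 1 = w) ∧
      (∀ lp : ℝ × ℝ, (0 < lp.1 ∧ lp.1 ≤ 1) → lp.2 ∈ Set.Icc (0 : ℝ) 1 →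
          lp.1 * lp.2 + (1 - lp.1) * 1 = p → lp.1 * m lp.2 + (1 - lp.1) * m 1 = w →
          0 ≤ lp.2 ∧ lp.2 ≤ p) := by
  rintro p ⟨hp0, hp1⟩ w hmw hw
  have hp : p ∈ Icc (0 : ℝ) 1 := ⟨hp0, hp1.le⟩
  have hgap_p : splitGap m p w p < 0 := by
    rw [splitGap_self]
    exact mul_neg_of_pos_of_neg (by linarith) (by linarith)
  have hgap_0 : 0 ≤ splitGap m p w 0 := by
    rw [splitGap_zero]
    linarith
  obtain ⟨φ, hφ, hzero⟩ := intermediate_value_Icc' hp0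
    ((continuousOn_splitGap hcont).mono (Icc_subset_Icc_right hp1.le)) ⟨hgap_p.le, hgap_0⟩
  have hφ_unique (lp : ℝ × ℝ) (h : IsSplitting m p w lp) : lp.2 = φ :=
    (convexOn_splitGap hp1.le hconv).eq_of_eq_of_lt h.2.1 ⟨hφ.1, hφ.2.trans hp1.le⟩ hp
      h.snd_le hφ.2 (h.splitGap_eq_zero.trans hzero.symm) (h.splitGap_eq_zero ▸ hgap_p)
  refine ⟨⟨_, isSplitting_of_splitGap_eq_zero hp1 hφ hzero,
    fun lp (h : IsSplitting m p w lp) => ?_⟩,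
    fun lp h₁ h₂ h₃ h₄ => ⟨h₂.1, IsSplitting.snd_le ⟨h₁, h₂, h₃, h₄⟩⟩⟩
  exact Prod.ext (by rw [h.fst_eq hp1, hφ_unique lp h]) (hφ_unique lp h)
end

section
/- The set of maximizers of h over [0,1) is a nonempty closed bounded interval [q̲, q̄] contained in [0,1); moreover h is weakly increasing on [0, q̲] and weakly decreasing on [q̄, 1). -/
/-!
Since `ŵ` is convex and `p ↦ 1 - p` is affine and positive on `[0,1)`, each superlevel set
`{h ≥ r} = {ŵ p + r (1 - p) ≤ m 1}` is convex, i.e. `h` is quasiconcave. As `h` is continuous and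
tends to `-∞` at `1`, its maximum is attained, the maximisers form a compact convex set, i.e. a
closed interval, and quasiconcavity forces `h` to increase up to it and decrease after it.
-/

open Set Filter Topology

theorem eq_lineMap_of_map_affineCombination {u : ℝ → ℝ}
    (hu : ∀ x y t : ℝ, u ((1 - t) * x + t * y) = (1 - t) * u x + t * u y) :
    u = AffineMap.lineMap (u 0) (u 1) :=
  funext fun x => by simpa [AffineMap.lineMap_apply_ring] using hu 0 1 x

theorem AffineMap.convexOn {E : Type*} [AddCommGroup E] [Module ℝ E] {s : Set E}
    (f : E →ᵃ[ℝ] ℝ) (hs : Convex ℝ s) : ConvexOn ℝ s f :=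
  ⟨hs, fun _ _ _ _ _ _ _ _ hab => (Convex.combo_affine_apply hab).le⟩

theorem ConcaveOn.quasiconcaveOn_div {E : Type*} [AddCommGroup E] [Module ℝ E] {s : Set E}
    {g : E → ℝ} (hg : ConcaveOn ℝ s g) (ℓ : E →ᵃ[ℝ] ℝ) (hℓ : ∀ x ∈ s, 0 < ℓ x) :
    QuasiconcaveOn ℝ s fun x => g x / ℓ x := by
  intro r
  have hsuper : {x ∈ s | r ≤ g x / ℓ x} = {x ∈ s | 0 ≤ (g - ⇑(r • ℓ)) x} := by
    ext x
    simp only [mem_ofPred_eq, Pi.sub_apply, AffineMap.coe_smul, Pi.smul_apply, smul_eq_mul,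
      sub_nonneg]
    exact and_congr_right fun hx => le_div_iff₀ (hℓ x hx)
  rw [hsuper]
  exact (hg.sub ((r • ℓ).convexOn hg.1)).convex_ge 0

theorem ConcaveOn.quasiconcaveOn_div_sub {s : Set ℝ} {g : ℝ → ℝ} {b : ℝ} (hg : ConcaveOn ℝ s g)
    (hs : ∀ x ∈ s, x < b) : QuasiconcaveOn ℝ s fun x => g x / (b - x) := by
  have hℓ (x : ℝ) : AffineMap.lineMap b (b - 1) x = b - x := by
    rw [AffineMap.lineMap_apply_ring']; ring
  simpa only [hℓ] using hg.quasiconcaveOn_div (AffineMap.lineMap b (b - 1)) fun x hx =>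
    (hℓ x).symm ▸ sub_pos.2 (hs x hx)

section LinearOrder

variable {𝕜 β : Type*} [Field 𝕜] [LinearOrder 𝕜] [IsStrictOrderedRing 𝕜] [LinearOrder β]
  {s : Set 𝕜} {f : 𝕜 → β} {x : 𝕜}

theorem QuasiconcaveOn.monotoneOn_of_isMaxOn (hf : QuasiconcaveOn 𝕜 s f) (hx : x ∈ s)
    (hmax : IsMaxOn f s x) : MonotoneOn f (s ∩ Iic x) := by
  rintro a ⟨ha, -⟩ b ⟨-, hbx⟩ hab
  exact ((hf (f a)).ordConnected.out ⟨ha, le_rfl⟩ ⟨hx, hmax ha⟩ ⟨hab, hbx⟩).2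

theorem QuasiconcaveOn.antitoneOn_of_isMaxOn (hf : QuasiconcaveOn 𝕜 s f) (hx : x ∈ s)
    (hmax : IsMaxOn f s x) : AntitoneOn f (s ∩ Ici x) := by
  rintro a ⟨-, hxa⟩ b ⟨hb, -⟩ hab
  exact ((hf (f b)).ordConnected.out ⟨hx, hmax hb⟩ ⟨hb, le_rfl⟩ ⟨hxa, hab⟩).2

end LinearOrder

theorem IsMaxOn.setOf_isMaxOn_eq {α β : Type*} [Preorder β] {s : Set α} {f : α → β} {x : α}
    (hx : x ∈ s) (hmax : IsMaxOn f s x) :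
    {p ∈ s | IsMaxOn f s p} = {p ∈ s | f x ≤ f p} := by
  ext p
  exact and_congr_right fun _ => ⟨fun hp => hp hx, fun hxp _ hq => (hmax hq).trans hxp⟩

section Ico

variable {f : ℝ → ℝ} {a b : ℝ}

/-- Beyond `r` the function stays below its value at `a`, so it is maximised on `[a, r]`. -/
theorem ContinuousOn.exists_isMaxOn_Ico_of_tendsto_atBot (hab : a < b)
    (hcont : ContinuousOn f (Ico a b)) (hlim : Tendsto f (𝓝[<] b) atBot) :
    ∃ r < b, ∃ x ∈ Icc a r, IsMaxOn f (Ico a b) x ∧ ∀ p ∈ Ico a b, f x ≤ f p → p ≤ r := by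
  obtain ⟨l, hlb, hl⟩ := mem_nhdsLT_iff_exists_Ioo_subset.1 (hlim.eventually_lt_atBot (f a))
  have har : a ≤ max a l := le_max_left a l
  have hrb : max a l < b := max_lt hab hlb
  obtain ⟨x, hx, hxmax⟩ := isCompact_Icc.exists_isMaxOn (nonempty_Icc.2 har)
    (hcont.mono (Icc_subset_Ico_right hrb))
  have htail : ∀ p ∈ Ico a b, max a l < p → f p < f x := fun p hp hrp =>
    (hl ⟨(le_max_right a l).trans_lt hrp, hp.2⟩).trans_le (hxmax ⟨le_rfl, har⟩)
  refine ⟨max a l, hrb, x, hx, fun p hp => ?_, fun p hp hxp => not_lt.1 fun hrp =>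
    (htail p hp hrp).not_ge hxp⟩
  rcases le_or_gt p (max a l) with hpr | hrp
  · exact hxmax ⟨hp.1, hpr⟩
  · exact (htail p hp hrp).le

theorem QuasiconcaveOn.exists_setOf_isMaxOn_Ico_eq_Icc (hab : a < b)
    (hf : QuasiconcaveOn ℝ (Ico a b) f) (hcont : ContinuousOn f (Ico a b))
    (hlim : Tendsto f (𝓝[<] b) atBot) :
    ∃ ql qh, a ≤ ql ∧ ql ≤ qh ∧ qh < b ∧
      {p ∈ Ico a b | IsMaxOn f (Ico a b) p} = Icc ql qh ∧
      MonotoneOn f (Icc a ql) ∧ AntitoneOn f (Ico qh b) := by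
  obtain ⟨r, hrb, x, hx, hxmax, hle⟩ := hcont.exists_isMaxOn_Ico_of_tendsto_atBot hab hlim
  set S := {p ∈ Ico a b | IsMaxOn f (Ico a b) p}
  have hxs : x ∈ Ico a b := ⟨hx.1, hx.2.trans_lt hrb⟩
  have hS : S = {p ∈ Ico a b | f x ≤ f p} := hxmax.setOf_isMaxOn_eq hxs
  have hSr : S = Icc a r ∩ f ⁻¹' Ici (f x) := by
    rw [hS]
    ext p
    exact ⟨fun ⟨hp, hxp⟩ => ⟨⟨hp.1, hle p hp hxp⟩, hxp⟩,
      fun ⟨hp, hxp⟩ => ⟨⟨hp.1, hp.2.trans_lt hrb⟩, hxp⟩⟩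
  have hne : S.Nonempty := ⟨x, hxs, hxmax⟩
  have hcompact : IsCompact S := hSr ▸ isCompact_Icc.of_isClosed_subset
    ((hcont.mono (Icc_subset_Ico_right hrb)).preimage_isClosed_of_isClosed isClosed_Icc
      isClosed_Ici) inter_subset_left
  have hconn : IsConnected S := (hS ▸ hf (f x)).isConnected hne
  obtain ⟨hql, hql_max⟩ : sInf S ∈ S := hcompact.sInf_mem hne
  obtain ⟨hqh, hqh_max⟩ : sSup S ∈ S := hcompact.sSup_mem hne
  refine ⟨sInf S, sSup S, hql.1, csInf_le_csSup hne hcompact.bddBelow hcompact.bddAbove, hqh.2,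
    eq_Icc_of_connected_compact hconn hcompact, ?_, ?_⟩
  · exact (hf.monotoneOn_of_isMaxOn hql hql_max).mono fun p hp =>
      ⟨⟨hp.1, hp.2.trans_lt hql.2⟩, hp.2⟩
  · exact (hf.antitoneOn_of_isMaxOn hqh hqh_max).mono fun p hp =>
      ⟨⟨hqh.1.trans hp.1, hp.2⟩, hp.1⟩

end Ico

theorem tendsto_div_sub_nhdsLT_atBot {g : ℝ → ℝ} {b c : ℝ} (hc : c < 0)
    (hg : Tendsto g (𝓝[<] b) (𝓝 c)) :
    Tendsto (fun p => g p / (b - p)) (𝓝[<] b) atBot := by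
  have hsub : Tendsto (fun p => b - p) (𝓝[<] b) (𝓝[>] 0) :=
    tendsto_nhdsWithin_iff.2
      ⟨((continuous_sub_left b).tendsto' b 0 (sub_self b)).mono_left nhdsWithin_le_nhds,
        eventually_nhdsWithin_of_forall fun _ hp => mem_Ioi.2 (sub_pos.2 hp)⟩
  exact hg.neg_mul_atTop hc (tendsto_inv_nhdsGT_zero.comp hsub)

/-- with `ŵ(p) = (m(p) − (1−δ)·u*(p))/δ` and
`h(p) = (m(1) − ŵ(p))/(1 − p)` on `[0,1)`, the set of maximizers of `h` over `[0,1)`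
is a nonempty closed bounded interval `[q̲, q̄] ⊆ [0,1)`; moreover `h` is weakly
increasing on `[0, q̲]` and weakly decreasing on `[q̄, 1)`. -/
theorem maximizers_of_h_form_interval
    (m ustar : ℝ → ℝ) (δ : ℝ) (hδ : δ ∈ Set.Ioo (0 : ℝ) 1)
    (hconv : ConvexOn ℝ (Set.Icc (0 : ℝ) 1) m)
    (hcont : ContinuousOn m (Set.Icc (0 : ℝ) 1))
    (haff : ∀ x y t : ℝ, ustar ((1 - t) * x + t * y) = (1 - t) * ustar x + t * ustar y)
    (hlt : ustar 1 < m 1) :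
    ∀ h : ℝ → ℝ,
      (∀ p : ℝ, h p = (m 1 - (m p - (1 - δ) * ustar p) / δ) / (1 - p)) →
      ∃ ql qh : ℝ, 0 ≤ ql ∧ ql ≤ qh ∧ qh < 1 ∧
        {p ∈ Set.Ico (0 : ℝ) 1 | ∀ q ∈ Set.Ico (0 : ℝ) 1, h q ≤ h p} = Set.Icc ql qh ∧
        MonotoneOn h (Set.Icc 0 ql) ∧
        AntitoneOn h (Set.Ico qh 1) := by
  intro h hh
  obtain ⟨hδ0, hδ1⟩ := hδ
  obtain ⟨u, rfl⟩ : ∃ u : ℝ →ᵃ[ℝ] ℝ, ⇑u = ustar :=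
    ⟨_, (eq_lineMap_of_map_affineCombination haff).symm⟩
  set w : ℝ → ℝ := fun p => (m p - (1 - δ) * u p) / δ
  have hw : ConvexOn ℝ (Icc 0 1) w :=
    ((hconv.add ((-(1 - δ) • u).convexOn (convex_Icc 0 1))).smul (inv_nonneg.2 hδ0.le)).congr
      fun p _ => by
        simp only [neg_sub, AffineMap.coe_smul, Pi.add_apply, Pi.smul_apply, smul_eq_mul, w]
        ring
  have hwc : ContinuousOn w (Icc 0 1) := (hcont.sub (continuousOn_const.mul
    u.continuous_of_finiteDimensional.continuousOn)).div_const δ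
  have hw1 : m 1 < w 1 := by
    rw [lt_div_iff₀ hδ0]
    nlinarith [mul_lt_mul_of_pos_left hlt (sub_pos.2 hδ1)]
  rw [show h = fun p => (m 1 - w p) / (1 - p) from funext hh]
  refine QuasiconcaveOn.exists_setOf_isMaxOn_Ico_eq_Icc zero_lt_one ?_ ?_ ?_
  · exact ((concaveOn_const (m 1) (convex_Ico 0 1)).sub
      (hw.subset Ico_subset_Icc_self (convex_Ico 0 1))).quasiconcaveOn_div_sub fun p hp => hp.2
  · exact (continuousOn_const.sub (hwc.mono Ico_subset_Icc_self)).div (by fun_prop)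
      fun p hp => (sub_pos.2 hp.2).ne'
  · refine tendsto_div_sub_nhdsLT_atBot (sub_neg.2 hw1) (tendsto_const_nhds.sub ?_)
    exact ((hwc 1 (right_mem_Icc.2 zero_le_one)).mono_of_mem_nhdsWithin
      (Icc_mem_nhdsLT zero_lt_one)).tendsto
end

section
/- For all p, φ ∈ [0,1] and all λ, w ∈ ℝ satisfying λ·φ + (1−λ)·1 = p, λ·m(φ) + (1−λ)·m(1) = w, and δ·w = m(p) − (1−δ)·u*(p), one has the identity (1−δ)·v*(p) + δ·λ·F(φ) = F(p). (This shows that F(p) = v*(p) − ((m(p) − u*(p))/(m(1) − u*(1)))·v*(1) is the unique solution of the fixed-point equation characterizing the value of the optimal policy on the absorbing set of beliefs Q^∞.) -/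
/-- the closed-form value
`F(x) = v*(x) − ((m(x) − u*(x))/(m(1) − u*(1)))·v*(1)` satisfies the fixed-point
identity `(1−δ)·v*(p) + δ·λ·F(φ) = F(p)` along any splitting of `p` into `φ` and `1`
with weights `λ, 1−λ` delivering the promised utility `w` with
`δ·w = m(p) − (1−δ)·u*(p)`. -/
theorem closed_form_value_fixed_point
    (δ : ℝ) (hδ : δ ∈ Set.Ioo (0 : ℝ) 1)
    (ustar vstar : ℝ → ℝ)
    (huaff : ∀ x y t : ℝ, ustar ((1 - t) * x + t * y) = (1 - t) * ustar x + t * ustar y)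
    (hvaff : ∀ x y t : ℝ, vstar ((1 - t) * x + t * y) = (1 - t) * vstar x + t * vstar y)
    (m : ℝ → ℝ) (hm1 : m 1 ≠ ustar 1)
    (F : ℝ → ℝ)
    (hF : ∀ x : ℝ, F x = vstar x - ((m x - ustar x) / (m 1 - ustar 1)) * vstar 1) :
    ∀ p ∈ Set.Icc (0 : ℝ) 1, ∀ φ ∈ Set.Icc (0 : ℝ) 1, ∀ lam w : ℝ,
      lam * φ + (1 - lam) * 1 = p →
      lam * m φ + (1 - lam) * m 1 = w →
      δ * w = m p - (1 - δ) * ustar p →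
      (1 - δ) * vstar p + δ * lam * F φ = F p := by
  intro p hp φ hφ lam w hsplit hw hfix
  have hd : m 1 - ustar 1 ≠ 0 := sub_ne_zero.mpr hm1
  have hup : ustar p = lam * ustar φ + (1 - lam) * ustar 1 := by
    have h := huaff φ 1 (1 - lam)
    rw [show (1 - (1 - lam)) = lam by ring, hsplit] at h
    exact h
  have hvp : vstar p = lam * vstar φ + (1 - lam) * vstar 1 := by
    have h := hvaff φ 1 (1 - lam)
    rw [show (1 - (1 - lam)) = lam by ring, hsplit] at h
    exact h
  have hmp : m p = δ * (lam * m φ + (1 - lam) * m 1) + (1 - δ) * ustar p := by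
    rw [hw]; linarith [hfix]
  rw [hF, hF, hmp, hup, hvp]
  field_simp
  ring
end

section
/- Value of the optimal random-disclosure policy: set α* = ((1−δ)/δ)·(m − u)/(M − m). Then α* ∈ [0,1], the feasible set {α ∈ [0,1] : U(α) ≥ m} equals the interval [α*, 1], and the maximum of V(α) over this feasible set is attained at α = α*, with maximal value V(α*) = ((M − m)/(M − u))·v. -/
/-- value of the optimal random-disclosure policy.  With
`α* = ((1−δ)/δ)·(m−u)/(M−m)`, one has `α* ∈ [0,1]`, the feasible set
`{α ∈ [0,1] : U(α) ≥ m}` equals `[α*, 1]`, and `V` is maximized on it at `α*`,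
with value `((M−m)/(M−u))·v`. -/
theorem random_disclosure_value
    (δ u m M v : ℝ) (hδ : δ ∈ Set.Ioo (0 : ℝ) 1)
    (hum : u ≤ m) (hmM : m < M) (hIC : m ≤ (1 - δ) * u + δ * M) (hv : 0 < v) :
    ∀ αstar : ℝ, αstar = ((1 - δ) / δ) * ((m - u) / (M - m)) →
      αstar ∈ Set.Icc (0 : ℝ) 1 ∧
      {α ∈ Set.Icc (0 : ℝ) 1 | m ≤ ((1 - δ) * u + δ * α * M) / (1 - δ * (1 - α))}
        = Set.Icc αstar 1 ∧
      (∀ α ∈ Set.Icc αstar 1,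
        (1 - δ) * v / (1 - δ * (1 - α)) ≤ (1 - δ) * v / (1 - δ * (1 - αstar))) ∧
      (1 - δ) * v / (1 - δ * (1 - αstar)) = ((M - m) / (M - u)) * v := by
  obtain ⟨hδ0, hδ1⟩ := hδ
  intro αs hαs
  have hMm : (0:ℝ) < M - m := by linarith
  have hMu : (0:ℝ) < M - u := by linarith
  have h1δ : (0:ℝ) < 1 - δ := by linarith
  have hkey : ∀ α : ℝ, αs ≤ α ↔ (1 - δ) * (m - u) ≤ δ * α * (M - m) := by
    intro α
    rw [hαs, div_mul_div_comm, div_le_iff₀ (by positivity)]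
    constructor <;> intro h <;> nlinarith
  have hαs0 : 0 ≤ αs := by
    rw [hαs]
    have : 0 ≤ m - u := by linarith
    positivity
  have hαs1 : αs ≤ 1 := by rw [hkey 1]; nlinarith
  have hden : ∀ α : ℝ, 0 ≤ α → 0 < 1 - δ * (1 - α) := by intro α h; nlinarith
  refine ⟨⟨hαs0, hαs1⟩, ?_, ?_, ?_⟩
  · ext α
    simp only [Set.mem_setOf_eq, Set.mem_Icc]
    constructor
    · rintro ⟨⟨h0, h1⟩, hU⟩
      rw [le_div_iff₀ (hden α h0)] at hU
      exact ⟨(hkey α).2 (by nlinarith), h1⟩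
    · rintro ⟨hl, h1⟩
      have h0 : 0 ≤ α := le_trans hαs0 hl
      have := (hkey α).1 hl
      refine ⟨⟨h0, h1⟩, ?_⟩
      rw [le_div_iff₀ (hden α h0)]
      nlinarith
  · rintro α ⟨hl, h1⟩
    have h0 : 0 ≤ α := le_trans hαs0 hl
    have hd1 := hden αs hαs0
    have hd2 := hden α h0
    apply div_le_div_of_nonneg_left (by positivity) hd1
    nlinarith
  · have hds : 1 - δ * (1 - αs) = (1 - δ) * ((M - u) / (M - m)) := by
      rw [hαs]; field_simp; ring
    rw [hds]
    rw [div_eq_iff (by positivity)]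
    field_simp
end

section
/- First-best linear program: the maximum of p·α₁·v₁ + (1−p)·α₀·v₀ over pairs (α₀, α₁) ∈ [0,1] × [0,1] subject to the constraint p·α₁·c₁ + (1−p)·α₀·c₀ ≤ B equals p·max(0, (B − (1−p)·c₀)/(p·c₁))·v₁ + (1−p)·min(B/((1−p)·c₀), 1)·v₀. -/
/-- the first-best linear program.  The maximum of
`p·α₁·v₁ + (1−p)·α₀·v₀` over `(α₀, α₁) ∈ [0,1]²` subject to
`p·α₁·c₁ + (1−p)·α₀·c₀ ≤ B` equals
`p·max(0, (B − (1−p)·c₀)/(p·c₁))·v₁ + (1−p)·min(B/((1−p)·c₀), 1)·v₀`. -/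
theorem first_best_linear_program
    (p v0 v1 c0 c1 B : ℝ) (hp : p ∈ Set.Ioo (0 : ℝ) 1)
    (hv0 : 0 < v0) (hv1 : 0 < v1) (hc0 : 0 < c0) (hc1 : 0 < c1)
    (hslope : v1 * c0 ≤ v0 * c1)
    (hB0 : 0 ≤ B) (hB1 : B ≤ p * c1 + (1 - p) * c0) :
    IsGreatest
      {x : ℝ | ∃ α0 α1 : ℝ, α0 ∈ Set.Icc (0 : ℝ) 1 ∧ α1 ∈ Set.Icc (0 : ℝ) 1 ∧
        p * α1 * c1 + (1 - p) * α0 * c0 ≤ B ∧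
        x = p * α1 * v1 + (1 - p) * α0 * v0}
      (p * max 0 ((B - (1 - p) * c0) / (p * c1)) * v1
        + (1 - p) * min (B / ((1 - p) * c0)) 1 * v0) := by
  obtain ⟨hp0, hp1⟩ := hp
  have hq : (0:ℝ) < 1 - p := by linarith
  have hpc1 : (0:ℝ) < p * c1 := by positivity
  have hqc0 : (0:ℝ) < (1 - p) * c0 := by positivity
  constructor
  · refine ⟨min (B / ((1 - p) * c0)) 1, max 0 ((B - (1 - p) * c0) / (p * c1)),
      ⟨le_min (div_nonneg hB0 hqc0.le) zero_le_one, min_le_right _ _⟩,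
      ⟨le_max_left _ _, max_le zero_le_one
        ((div_le_one hpc1).mpr (by linarith))⟩, ?_, rfl⟩
    by_cases h : B ≤ (1 - p) * c0
    · rw [max_eq_left (div_nonpos_of_nonpos_of_nonneg (by linarith) hpc1.le),
        min_eq_left ((div_le_one hqc0).mpr h)]
      have : (1 - p) * (B / ((1 - p) * c0)) * c0 = B := by
        field_simp
      linarith
    · push_neg at h
      rw [min_eq_right ((one_le_div hqc0).mpr h.le),
        max_eq_right (div_nonneg (by linarith) hpc1.le)]
      have : p * ((B - (1 - p) * c0) / (p * c1)) * c1 = B - (1 - p) * c0 := by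
        field_simp
      linarith
  · rintro x ⟨α0, α1, ⟨h00, h01⟩, ⟨h10, h11⟩, hc, rfl⟩
    by_cases h : B ≤ (1 - p) * c0
    · rw [max_eq_left (div_nonpos_of_nonpos_of_nonneg (by linarith) hpc1.le),
        min_eq_left ((div_le_one hqc0).mpr h)]
      have key : (p * α1 * v1 + (1 - p) * α0 * v0) * c0 ≤ B * v0 := by
        nlinarith [mul_le_mul_of_nonneg_left hslope (mul_nonneg hp0.le h10),
          mul_le_mul_of_nonneg_right hc hv0.le]
      have hr : (1 - p) * (B / ((1 - p) * c0)) * v0 = B * v0 / c0 := by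
        field_simp
      rw [hr, show p * 0 * v1 + B * v0 / c0 = B * v0 / c0 from by ring,
        le_div_iff₀ hc0]
      linarith
    · push_neg at h
      rw [min_eq_right ((one_le_div hqc0).mpr h.le),
        max_eq_right (div_nonneg (by linarith) hpc1.le)]
      have key : (p * α1 * v1 + (1 - p) * α0 * v0) * c1
          ≤ (B - (1 - p) * c0) * v1 + (1 - p) * v0 * c1 := by
        nlinarith [mul_le_mul_of_nonneg_right hc hv1.le,
          mul_nonneg (mul_nonneg hq.le (sub_nonneg.mpr h01)) (sub_nonneg.mpr hslope)]
      have hr : p * ((B - (1 - p) * c0) / (p * c1)) * v1 + (1 - p) * 1 * v0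
          = ((B - (1 - p) * c0) * v1 + (1 - p) * v0 * c1) / c1 := by
        field_simp
      rw [hr, le_div_iff₀ hc1]
      linarith
end

section
/- For every k ∈ ℕ: Q^{k+1} ⊆ Qᵏ, P ⊆ Qᵏ, and if Qᵏ is nonempty then Qᵏ is a closed subinterval of [0,1]. -/
/-!
Each `Q^{k+1}` is cut out of the interval `Qᵏ = [a, b]` by `m ≤ L`, where
`L = (1 - δ) u* + δ Uᵏ` is affine; as `m` is convex and continuous this sublevel set is a closed
interval. A point `p` with `m p = u* p` survives each step because `u*` lies below `m` at `a`
and at `1`, so on `[a, 1]` it lies below the chord `Uᵏ` of `m` through those two points.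
-/

open Classical in
/-- The decreasing sequence of sets `Qᵏ`: `Q⁰ = [0,1]` and
`Q^{k+1} = {q ∈ Qᵏ : (1−δ)·u*(q) + δ·Uᵏ(q) ≥ m(q)}`, where `Uᵏ` is the chord of `m`
from `(inf Qᵏ, m(inf Qᵏ))` to `(1, m(1))` (constant `m(1)` if `inf Qᵏ = 1`). -/
noncomputable def Qseq (m ustar : ℝ → ℝ) (δ : ℝ) : ℕ → Set ℝ
  | 0 => Set.Icc 0 1
  | k + 1 =>
      if Qseq m ustar δ k = ∅ then (∅ : Set ℝ)
      else
        {q ∈ Qseq m ustar δ k |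
          (1 - δ) * ustar q +
            δ * (if sInf (Qseq m ustar δ k) < 1 then
                ((1 - q) * m (sInf (Qseq m ustar δ k))
                  + (q - sInf (Qseq m ustar δ k)) * m 1) / (1 - sInf (Qseq m ustar δ k))
              else m 1)
          ≥ m q}

open Set

/-- `Uᵏ(q)` with `a = inf Qᵏ`. -/
noncomputable def chordToOne (f : ℝ → ℝ) (a q : ℝ) : ℝ :=
  if a < 1 then ((1 - q) * f a + (q - a) * f 1) / (1 - a) else f 1

lemma exists_eq_Icc_of_isClosed_of_convex {S : Set ℝ} {a b : ℝ} (hSab : S ⊆ Icc a b)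
    (hne : S.Nonempty) (hcl : IsClosed S) (hcv : Convex ℝ S) :
    ∃ c d, a ≤ c ∧ c ≤ d ∧ d ≤ b ∧ S = Icc c d := by
  have hbdd : BddBelow S ∧ BddAbove S := ⟨bddBelow_Icc.mono hSab, bddAbove_Icc.mono hSab⟩
  have hS :=
    eq_Icc_csInf_csSup_of_connected_bdd_closed ⟨hne, hcv.isPreconnected⟩ hbdd.1 hbdd.2 hcl
  have hcd : sInf S ≤ sSup S := csInf_le_csSup hne hbdd.1 hbdd.2
  rw [hS, Icc_subset_Icc_iff hcd] at hSab
  exact ⟨_, _, hSab.1, hcd, hSab.2, hS⟩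

lemma ConvexOn.exists_eq_Icc_sep_le_affine {f : ℝ → ℝ} {a b c d : ℝ}
    (hf : ConvexOn ℝ (Icc a b) f) (hfc : ContinuousOn f (Icc a b))
    (hne : {x ∈ Icc a b | f x ≤ c + d * x}.Nonempty) :
    ∃ a' b', a ≤ a' ∧ a' ≤ b' ∧ b' ≤ b ∧
      {x ∈ Icc a b | f x ≤ c + d * x} = Icc a' b' := by
  have hg : ConcaveOn ℝ (Icc a b) (fun x => c + d * x) :=
    (concaveOn_const c (convex_Icc a b)).add
      ((LinearMap.mulLeft ℝ d).concaveOn (convex_Icc a b))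
  refine exists_eq_Icc_of_isClosed_of_convex (sep_subset _ _) hne ?_ ?_
  · exact isClosed_Icc.isClosed_le hfc (by fun_prop)
  · simpa only [Pi.sub_apply, sub_nonpos] using (hf.sub hg).convex_le 0

lemma exists_chordToOne_eq_affine (f : ℝ → ℝ) (a : ℝ) :
    ∃ c d : ℝ, ∀ q, chordToOne f a q = c + d * q := by
  unfold chordToOne
  split_ifs with ha
  · have : 1 - a ≠ 0 := by linarith
    exact ⟨(f a - a * f 1) / (1 - a), (f 1 - f a) / (1 - a), fun q => by field_simp; ring⟩
  · exact ⟨f 1, 0, fun q => by ring⟩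

lemma chordToOne_eq_self_of_affine {u : ℝ → ℝ} {c d a q : ℝ} (hu : ∀ x, u x = c + d * x)
    (haq : a ≤ q) (hq : q ≤ 1) : chordToOne u a q = u q := by
  unfold chordToOne
  split_ifs with ha
  · have : 1 - a ≠ 0 := by linarith
    rw [hu a, hu 1, hu q]
    field_simp
    ring
  · obtain rfl : q = 1 := by linarith
    rfl

lemma chordToOne_mono {f g : ℝ → ℝ} {a q : ℝ} (ha : f a ≤ g a) (h1 : f 1 ≤ g 1)
    (haq : a ≤ q) (hq : q ≤ 1) : chordToOne f a q ≤ chordToOne g a q := by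
  unfold chordToOne
  split_ifs with ha1
  · gcongr
  · exact h1

section Qseq

variable {m ustar : ℝ → ℝ} {δ : ℝ}

lemma Qseq_succ (k : ℕ) :
    Qseq m ustar δ (k + 1) =
      if Qseq m ustar δ k = ∅ then ∅
      else {q ∈ Qseq m ustar δ k |
        m q ≤ (1 - δ) * ustar q + δ * chordToOne m (sInf (Qseq m ustar δ k)) q} :=
  rfl

lemma Qseq_succ_subset (k : ℕ) : Qseq m ustar δ (k + 1) ⊆ Qseq m ustar δ k := by
  rw [Qseq_succ]
  split_ifs
  · exact empty_subset _
  · exact sep_subset _ _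

lemma Qseq_succ_of_eq_Icc {k : ℕ} {a b : ℝ} (hab : a ≤ b) (hk : Qseq m ustar δ k = Icc a b) :
    Qseq m ustar δ (k + 1) =
      {q ∈ Icc a b | m q ≤ (1 - δ) * ustar q + δ * chordToOne m a q} := by
  rw [Qseq_succ, hk, csInf_Icc hab, if_neg (nonempty_Icc.2 hab).ne_empty]

variable {c d : ℝ}

lemma Qseq_eq_Icc_of_nonempty (hconv : ConvexOn ℝ (Icc 0 1) m) (hcont : ContinuousOn m (Icc 0 1))
    (hu : ∀ x, ustar x = c + d * x) :
    ∀ k, (Qseq m ustar δ k).Nonempty →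
      ∃ a b : ℝ, 0 ≤ a ∧ a ≤ b ∧ b ≤ 1 ∧ Qseq m ustar δ k = Icc a b
  | 0, _ => ⟨0, 1, le_rfl, zero_le_one, le_rfl, rfl⟩
  | k + 1, hne => by
    obtain ⟨a, b, ha, hab, hb, hk⟩ :=
      Qseq_eq_Icc_of_nonempty hconv hcont hu k (hne.mono (Qseq_succ_subset k))
    obtain ⟨c', d', hchord⟩ := exists_chordToOne_eq_affine m a
    have hL : ∀ q, (1 - δ) * ustar q + δ * chordToOne m a q
        = ((1 - δ) * c + δ * c') + ((1 - δ) * d + δ * d') * q := fun q => by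
      rw [hu q, hchord q]; ring
    have hsub : Icc a b ⊆ Icc 0 1 := Icc_subset_Icc ha hb
    rw [Qseq_succ_of_eq_Icc hab hk] at hne ⊢
    simp only [hL] at hne ⊢
    obtain ⟨a', b', ha', hab', hb', heq⟩ :=
      (hconv.subset hsub (convex_Icc a b)).exists_eq_Icc_sep_le_affine (hcont.mono hsub) hne
    exact ⟨a', b', ha.trans ha', hab', hb'.trans hb, heq⟩

lemma setOf_eq_subset_Qseq (hδ : 0 ≤ δ) (hconv : ConvexOn ℝ (Icc 0 1) m)
    (hcont : ContinuousOn m (Icc 0 1)) (hu : ∀ x, ustar x = c + d * x)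
    (hle : ∀ p ∈ Icc (0 : ℝ) 1, ustar p ≤ m p) :
    ∀ k, {p ∈ Icc (0 : ℝ) 1 | m p = ustar p} ⊆ Qseq m ustar δ k
  | 0 => sep_subset _ _
  | k + 1 => by
    rintro p ⟨hp, hmp⟩
    have hpk := setOf_eq_subset_Qseq hδ hconv hcont hu hle k ⟨hp, hmp⟩
    obtain ⟨a, b, ha, hab, hb, hk⟩ := Qseq_eq_Icc_of_nonempty hconv hcont hu k ⟨p, hpk⟩
    rw [hk] at hpk
    rw [Qseq_succ_of_eq_Icc hab hk]
    refine ⟨hpk, ?_⟩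
    have hchord : ustar p ≤ chordToOne m a p := calc
      ustar p = chordToOne ustar a p := (chordToOne_eq_self_of_affine hu hpk.1 hp.2).symm
      _ ≤ chordToOne m a p :=
        chordToOne_mono (hle a ⟨ha, hab.trans hb⟩) (hle 1 ⟨zero_le_one, le_rfl⟩) hpk.1 hp.2
    calc m p = (1 - δ) * ustar p + δ * ustar p := by rw [hmp]; ring
      _ ≤ (1 - δ) * ustar p + δ * chordToOne m a p := by gcongr

end Qseq

/-- for every `k`, `Q^(k+1) ⊆ Qᵏ`, `P ⊆ Qᵏ`, and a nonempty `Qᵏ` is a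
closed subinterval of `[0,1]`. -/
theorem Qseq_decreasing_contains_P_interval
    (m ustar : ℝ → ℝ) (δ : ℝ) (hδ : δ ∈ Set.Ioo (0 : ℝ) 1)
    (hconv : ConvexOn ℝ (Set.Icc (0 : ℝ) 1) m)
    (hcont : ContinuousOn m (Set.Icc (0 : ℝ) 1))
    (haff : ∀ x y t : ℝ, ustar ((1 - t) * x + t * y) = (1 - t) * ustar x + t * ustar y)
    (hle : ∀ p ∈ Set.Icc (0 : ℝ) 1, ustar p ≤ m p) :
    ∀ k : ℕ,
      Qseq m ustar δ (k + 1) ⊆ Qseq m ustar δ k ∧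
      {p ∈ Set.Icc (0 : ℝ) 1 | m p = ustar p} ⊆ Qseq m ustar δ k ∧
      ((Qseq m ustar δ k).Nonempty →
        ∃ a b : ℝ, 0 ≤ a ∧ a ≤ b ∧ b ≤ 1 ∧ Qseq m ustar δ k = Set.Icc a b) := by
  have hu : ∀ x, ustar x = ustar 0 + (ustar 1 - ustar 0) * x := fun x => by
    simpa using (haff 0 1 x).trans (by ring)
  exact fun k => ⟨Qseq_succ_subset k, setOf_eq_subset_Qseq hδ.1.le hconv hcont hu hle k,
    Qseq_eq_Icc_of_nonempty hconv hcont hu k⟩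
end

section
/- Fix p ∈ (0,1). On the interval (m(p), c(p)], the functions w ↦ φ(w) and w ↦ λ(w) are weakly decreasing, and the function w ↦ (1 − λ(w))/(w − m(p)) is weakly decreasing. -/
/-!
Writing `x = φ(w)`, the splitting equations give `1 - λ(w) = (p - x) / (1 - x)` and
`w - m(p) = (1 - λ(w)) · G(x)`, where `G = gapAtOne m p` gives the height of `m(1)` above the
extension to `1` of the chord of `m` over `[x, p]`. By convexity the slope of that chord increases
with `x`, so `G` is decreasing, while `(p - x) / (1 - x)` is strictly decreasing. Hence `w - m(p)`
strictly decreases in `x` while it stays positive, which makes `φ` (and with it `λ`) decreasing in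
`w`, and `(1 - λ(w)) / (w - m(p)) = 1 / G(φ(w))` is decreasing as well.
-/

open Set

noncomputable def gapAtOne (m : ℝ → ℝ) (p x : ℝ) : ℝ := m 1 - (m p + (1 - p) * slope m x p)

lemma gapAtOne_antitoneOn {m : ℝ → ℝ} {s : Set ℝ} {p : ℝ} (hm : ConvexOn ℝ s m) (hps : p ∈ s)
    (hp1 : p ≤ 1) : AntitoneOn (gapAtOne m p) (s \ {p}) := by
  intro x hx y hy hxy
  have hslope := hm.slope_mono hps hx hy hxy
  rw [slope_comm m p x, slope_comm m p y] at hslope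
  unfold gapAtOne
  gcongr

lemma strictAntiOn_sub_div_one_sub {p : ℝ} (hp1 : p < 1) :
    StrictAntiOn (fun x => (p - x) / (1 - x)) (Iio 1) := by
  intro x hx y hy hxy
  rw [mem_Iio] at hx hy
  rw [div_lt_div_iff₀ (by linarith) (by linarith)]
  nlinarith

section Splitting

variable {m : ℝ → ℝ} {p l x w : ℝ}

lemma lt_of_splitting (hp1 : p < 1) (hw : m p < w) (hxp : x ≤ p)
    (hbary : l * x + (1 - l) * 1 = p) (hval : l * m x + (1 - l) * m 1 = w) : x < p := by
  refine hxp.lt_of_ne ?_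
  rintro rfl
  have hl : (l - 1) * (1 - x) = 0 := by linear_combination -hbary
  rcases mul_eq_zero.1 hl with hl | hx
  · obtain rfl : l = 1 := by linarith
    linarith
  · linarith

lemma one_sub_eq_of_splitting (hx1 : x ≠ 1) (hbary : l * x + (1 - l) * 1 = p) :
    1 - l = (p - x) / (1 - x) := by
  rw [eq_div_iff (sub_ne_zero.2 hx1.symm)]
  linear_combination hbary

lemma sub_eq_mul_gapAtOne_of_splitting (hxp : x ≠ p)
    (hbary : l * x + (1 - l) * 1 = p) (hval : l * m x + (1 - l) * m 1 = w) :
    w - m p = (1 - l) * gapAtOne m p x := by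
  have hweights : (1 - l) * (1 - p) = l * (p - x) := by linear_combination hbary
  have hchord : (1 - l) * ((1 - p) * slope m x p) = l * (m p - m x) := by
    rw [← mul_assoc, hweights, slope_def_field, mul_assoc,
      mul_div_cancel₀ _ (sub_ne_zero.2 hxp.symm)]
  rw [gapAtOne]
  linear_combination hchord - hval

lemma splitting_facts (hp1 : p < 1) (hw : m p < w) (hxp : x ≤ p)
    (hbary : l * x + (1 - l) * 1 = p) (hval : l * m x + (1 - l) * m 1 = w) :
    x < p ∧ 0 < 1 - l ∧ 1 - l = (p - x) / (1 - x) ∧ 0 < gapAtOne m p x ∧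
      w - m p = (1 - l) * gapAtOne m p x := by
  have hxlt := lt_of_splitting hp1 hw hxp hbary hval
  have hl := one_sub_eq_of_splitting (hxlt.trans hp1).ne hbary
  have hl_pos : 0 < 1 - l := hl ▸ div_pos (by linarith) (by linarith)
  have hw_eq := sub_eq_mul_gapAtOne_of_splitting hxlt.ne hbary hval
  exact ⟨hxlt, hl_pos, hl, pos_of_mul_pos_right (hw_eq ▸ sub_pos.2 hw) hl_pos.le, hw_eq⟩

end Splitting

theorem splitting_monotone_in_w_general
    (m : ℝ → ℝ) (hconv : ConvexOn ℝ (Set.Icc (0 : ℝ) 1) m)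
    (p : ℝ) (hp : p ∈ Set.Ioo (0 : ℝ) 1)
    (lam phi : ℝ → ℝ)
    (hsplit : ∀ w : ℝ, m p < w → w ≤ (1 - p) * m 0 + p * m 1 →
      0 < lam w ∧ lam w ≤ 1 ∧ 0 ≤ phi w ∧ phi w ≤ p ∧
      lam w * phi w + (1 - lam w) * 1 = p ∧
      lam w * m (phi w) + (1 - lam w) * m 1 = w) :
    ∀ w₁ w₂ : ℝ, m p < w₁ → w₁ ≤ w₂ → w₂ ≤ (1 - p) * m 0 + p * m 1 →
      phi w₂ ≤ phi w₁ ∧ lam w₂ ≤ lam w₁ ∧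
      (1 - lam w₂) / (w₂ - m p) ≤ (1 - lam w₁) / (w₁ - m p) := by
  intro w₁ w₂ hw₁ hw₁₂ hw₂
  obtain ⟨hp0, hp1⟩ := hp
  have hweight := strictAntiOn_sub_div_one_sub hp1
  have hgap : AntitoneOn (gapAtOne m p) (Ico 0 p) := (gapAtOne_antitoneOn hconv ⟨hp0.le, hp1.le⟩ hp1.le).mono
    fun x hx => ⟨⟨hx.1, hx.2.le.trans hp1.le⟩, hx.2.ne⟩
  obtain ⟨-, -, hx₁0, hx₁p, hbary₁, hval₁⟩ := hsplit w₁ hw₁ (hw₁₂.trans hw₂)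
  obtain ⟨-, -, hx₂0, hx₂p, hbary₂, hval₂⟩ := hsplit w₂ (hw₁.trans_le hw₁₂) hw₂
  obtain ⟨hx₁lt, hl₁_pos, hl₁, hgap₁_pos, hw₁_eq⟩ := splitting_facts hp1 hw₁ hx₁p hbary₁ hval₁
  obtain ⟨hx₂lt, hl₂_pos, hl₂, hgap₂_pos, hw₂_eq⟩ :=
    splitting_facts hp1 (hw₁.trans_le hw₁₂) hx₂p hbary₂ hval₂
  have hphi : phi w₂ ≤ phi w₁ := by
    by_contra! hlt
    have : w₂ - m p < w₁ - m p := calc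
      w₂ - m p = (1 - lam w₂) * gapAtOne m p (phi w₂) := hw₂_eq
      _ < (1 - lam w₁) * gapAtOne m p (phi w₂) := by
        refine mul_lt_mul_of_pos_right ?_ hgap₂_pos
        rw [hl₁, hl₂]
        exact hweight (hx₁lt.trans hp1) (hx₂lt.trans hp1) hlt
      _ ≤ (1 - lam w₁) * gapAtOne m p (phi w₁) := by
        gcongr
        exact hgap ⟨hx₁0, hx₁lt⟩ ⟨hx₂0, hx₂lt⟩ hlt.le
      _ = w₁ - m p := hw₁_eq.symm
    linarith
  have hlam : 1 - lam w₁ ≤ 1 - lam w₂ := by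
    rw [hl₁, hl₂]
    exact hweight.antitoneOn (hx₂lt.trans hp1) (hx₁lt.trans hp1) hphi
  refine ⟨hphi, by linarith, ?_⟩
  rw [hw₁_eq, hw₂_eq, div_mul_cancel_left₀ hl₁_pos.ne', div_mul_cancel_left₀ hl₂_pos.ne']
  exact inv_anti₀ hgap₁_pos (hgap ⟨hx₂0, hx₂lt⟩ ⟨hx₁0, hx₁lt⟩ hphi)

/-- monotonicity of the splitting.  Fix `p ∈ (0,1)` and let
`(λ(w), φ(w))` be the unique splitting of `p` into `φ(w)` and `1` delivering utility
`w ∈ (m(p), c(p)]`, where `c` is the chord of `m` from `(0, m(0))` to `(1, m(1))`.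
Then `φ`, `λ`, and `w ↦ (1 − λ(w))/(w − m(p))` are weakly decreasing in `w`. -/
theorem splitting_monotone_in_w
    (m : ℝ → ℝ) (hconv : ConvexOn ℝ (Set.Icc (0 : ℝ) 1) m)
    (hcont : ContinuousOn m (Set.Icc (0 : ℝ) 1))
    (p : ℝ) (hp : p ∈ Set.Ioo (0 : ℝ) 1)
    (lam phi : ℝ → ℝ)
    (hsplit : ∀ w : ℝ, m p < w → w ≤ (1 - p) * m 0 + p * m 1 →
      0 < lam w ∧ lam w ≤ 1 ∧ 0 ≤ phi w ∧ phi w ≤ p ∧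
      lam w * phi w + (1 - lam w) * 1 = p ∧
      lam w * m (phi w) + (1 - lam w) * m 1 = w) :
    ∀ w₁ w₂ : ℝ, m p < w₁ → w₁ ≤ w₂ → w₂ ≤ (1 - p) * m 0 + p * m 1 →
      phi w₂ ≤ phi w₁ ∧ lam w₂ ≤ lam w₁ ∧
      (1 - lam w₂) / (w₂ - m p) ≤ (1 - lam w₁) / (w₁ - m p) :=
  splitting_monotone_in_w_general m hconv p hp lam phi hsplit
end
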